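/- Let Q be an inverse quantal frame, X a Q-sheaf, and 𝒮 ⊆ X a Hilbert basis. Then 𝒮 is principal (i.e., every s ∈ 𝒮 is a principal section) if and only if ⟨s,t⟩ ∈ Q_I for all s, t ∈ 𝒮. -/

import Mathlib

/-- A unital involutive quantale: a complete lattice with an associative
multiplication preserving arbitrary joins in each variable, a unit `e`, and a
join-preserving involution. -/
structure Quantale' (Q : Type*) [CompleteLattice Q] where
  mul : Q → Q → Q
  e : Q
  star : Q → Q
  mul_assoc : ∀ a b c, mul (mul a b) c = mul a (mul b c)
  sSup_mul : ∀ (S : Set Q) (b : Q), mul (sSup S) b = ⨆ a ∈ S, mul a b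
  mul_sSup : ∀ (a : Q) (S : Set Q), mul a (sSup S) = ⨆ b ∈ S, mul a b
  e_mul : ∀ a, mul e a = a
  mul_e : ∀ a, mul a e = a
  star_star : ∀ a, star (star a) = a
  star_mul : ∀ a b, star (mul a b) = mul (star b) (star a)
  star_sSup : ∀ S : Set Q, star (sSup S) = ⨆ a ∈ S, star a

/-- The set of partial units of a quantale. -/
def Quantale'.PU {Q : Type*} [CompleteLattice Q] (Qs : Quantale' Q) : Set Q :=
  {s | Qs.mul s (Qs.star s) ≤ Qs.e ∧ Qs.mul (Qs.star s) s ≤ Qs.e}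

/-- An inverse quantal frame: a unital involutive quantale which is a frame,
has a stable support, and whose partial units join to the top. -/
structure InverseQuantalFrame (Q : Type*) [Order.Frame Q] extends toQuantale : Quantale' Q where
  supp : Q → Q
  supp_le_e : ∀ a, supp a ≤ e
  supp_sSup : ∀ S : Set Q, supp (sSup S) = ⨆ a ∈ S, supp a
  supp_le_mul_star : ∀ a, supp a ≤ mul a (star a)
  le_supp_mul : ∀ a, a ≤ mul (supp a) a
  supp_stable : ∀ b a, b ≤ e → supp (mul b a) = mul b (supp a)
  sSup_PU : sSup {s | mul s (star s) ≤ e ∧ mul (star s) s ≤ e} = ⊤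

/-- A left module over a quantale: a complete lattice with a unital associative
action preserving arbitrary joins in each variable. -/
structure QuantaleModule {Q : Type*} [CompleteLattice Q] (Qs : Quantale' Q)
    (X : Type*) [CompleteLattice X] where
  act : Q → X → X
  act_mul : ∀ a b x, act (Qs.mul a b) x = act a (act b x)
  act_e : ∀ x, act Qs.e x = x
  sSup_act : ∀ (S : Set Q) (x : X), act (sSup S) x = ⨆ a ∈ S, act a x
  act_sSup : ∀ (a : Q) (S : Set X), act a (sSup S) = ⨆ x ∈ S, act a x

/-- A pre-Hilbert module over a quantale. -/
structure PreHilbertModule {Q : Type*} [CompleteLattice Q] (Qs : Quantale' Q)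
    (X : Type*) [CompleteLattice X] extends QuantaleModule Qs X where
  inner : X → X → Q
  inner_act : ∀ a x y, inner (act a x) y = Qs.mul a (inner x y)
  sSup_inner : ∀ (S : Set X) (y : X), inner (sSup S) y = ⨆ x ∈ S, inner x y
  inner_star : ∀ x y, inner x y = Qs.star (inner y x)

namespace PreHilbertModule

variable {Q X : Type*} [CompleteLattice Q] [CompleteLattice X] {Qs : Quantale' Q}

/-- A Hilbert section: `⟨x,s⟩s ≤ x` for all `x`. -/
def IsHilbertSection (H : PreHilbertModule Qs X) (s : X) : Prop :=
  ∀ x, H.act (H.inner x s) s ≤ x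

/-- A regular element: `⟨s,s⟩s = s`. -/
def IsRegularSection (H : PreHilbertModule Qs X) (s : X) : Prop :=
  H.act (H.inner s s) s = s

/-- A Hilbert basis: `x = ⋁_{t ∈ S} ⟨x,t⟩t` for all `x`. -/
def IsHilbertBasis (H : PreHilbertModule Qs X) (S : Set X) : Prop :=
  ∀ x, x = ⨆ t ∈ S, H.act (H.inner x t) t

/-- Non-degeneracy of the inner product. -/
def Nondegenerate (H : PreHilbertModule Qs X) : Prop :=
  ∀ x y, (∀ z, H.inner x z = H.inner y z) → x = y

end PreHilbertModule

/-- A `Q`-locale over an inverse quantal frame: a module which is a frame and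
satisfies the anchor condition. -/
structure QLocale {Q : Type*} [Order.Frame Q] (Qf : InverseQuantalFrame Q)
    (X : Type*) [Order.Frame X] extends QuantaleModule Qf.toQuantale X where
  anchor : ∀ b x, b ≤ Qf.e → act b x = act b ⊤ ⊓ x

/-- A `Q`-sheaf over an inverse quantal frame: a pre-Hilbert module which is a
frame, satisfies the anchor condition, and has a Hilbert basis. -/
structure QSheaf {Q : Type*} [Order.Frame Q] (Qf : InverseQuantalFrame Q)
    (X : Type*) [Order.Frame X] extends PreHilbertModule Qf.toQuantale X where
  anchor : ∀ b x, b ≤ Qf.e → act b x = act b ⊤ ⊓ x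
  hasBasis : ∃ S : Set X, ∀ x, x = ⨆ t ∈ S, act (inner x t) t

namespace QSheaf

variable {Q X : Type*} [Order.Frame Q] [Order.Frame X] {Qf : InverseQuantalFrame Q}

/-- The support `ς_X(x) = ⟨x,x⟩ ∧ e` of a `Q`-sheaf. -/
def sppX (H : QSheaf Qf X) (x : X) : Q := H.inner x x ⊓ Qf.e

/-- A local section: `ς_X(x)s = x` for all `x ≤ s`. -/
def IsLocalSection (H : QSheaf Qf X) (s : X) : Prop :=
  ∀ x ≤ s, H.act (H.sppX x) s = x

/-- A principal section: a local section with `⟨s,s⟩ ≤ e`. -/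
def IsPrincipalSection (H : QSheaf Qf X) (s : X) : Prop :=
  H.IsLocalSection s ∧ H.inner s s ≤ Qf.e

/-- A right local section: `x = s ∧ 1_Q·x` for all `x ≤ s`. -/
def IsRightLocalSection (H : QSheaf Qf X) (s : X) : Prop :=
  ∀ x ≤ s, x = s ⊓ H.act ⊤ x

/-- A local bisection: simultaneously a local section and a right local section. -/
def IsBisection (H : QSheaf Qf X) (s : X) : Prop :=
  H.IsLocalSection s ∧ H.IsRightLocalSection s

end QSheaf

/-!
Expanding `⟨s,s⟩` in the basis gives `⟨s,s⟩ = ⋁_{t ∈ 𝒮} ⟨s,t⟩⟨s,t⟩*`, and for a Hilbert section `t`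
each term `⟨s,t⟩⟨s,t⟩* = ⟨⟨s,t⟩t, s⟩` lies below `⟨s,s⟩`. So `⟨s,s⟩ ≤ e` for all `s ∈ 𝒮` amounts to
`⟨s,t⟩⟨s,t⟩* ≤ e` for all `s, t ∈ 𝒮`, and the second partial-unit inequality is the first one
for `⟨t,s⟩ = ⟨s,t⟩*`. The local-section half of principality comes for free: in a `Q`-sheaf every
Hilbert section is a local section, because the support axioms of `Q` give `x ≤ ς_X(x) x`.
-/

theorem monotone_of_map_sSup {α β : Type*} [CompleteLattice α] [CompleteLattice β] {f : α → β}
    (hf : ∀ S : Set α, f (sSup S) = ⨆ a ∈ S, f a) : Monotone f := fun a b hab => by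
  have hfb := hf {a, b}
  rw [sSup_pair, sup_eq_right.2 hab, iSup_pair] at hfb
  exact le_sup_left.trans_eq hfb.symm

namespace Quantale'

variable {Q : Type*} [CompleteLattice Q] (Qs : Quantale' Q)

theorem star_mono : Monotone Qs.star :=
  monotone_of_map_sSup Qs.star_sSup

end Quantale'

namespace QuantaleModule

variable {Q X : Type*} [CompleteLattice Q] [CompleteLattice X] {Qs : Quantale' Q}
  (M : QuantaleModule Qs X)

theorem act_mono_left (x : X) : Monotone (M.act · x) :=
  monotone_of_map_sSup (M.sSup_act · x)

theorem act_mono_right (a : Q) : Monotone (M.act a) :=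
  monotone_of_map_sSup (M.act_sSup a)

end QuantaleModule

namespace PreHilbertModule

variable {Q X : Type*} [CompleteLattice Q] [CompleteLattice X] {Qs : Quantale' Q}
  (H : PreHilbertModule Qs X)

theorem star_inner (x y : X) : Qs.star (H.inner x y) = H.inner y x :=
  (H.inner_star y x).symm

theorem inner_mono_left (y : X) : Monotone (H.inner · y) :=
  monotone_of_map_sSup (H.sSup_inner · y)

theorem inner_mono_right (x : X) : Monotone (H.inner x) := fun y z hyz => by
  rw [H.inner_star x y, H.inner_star x z]
  exact Qs.star_mono (H.inner_mono_left x hyz)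

theorem inner_biSup_left (S : Set X) (f : X → X) (y : X) :
    H.inner (⨆ t ∈ S, f t) y = ⨆ t ∈ S, H.inner (f t) y := by
  rw [← sSup_image, H.sSup_inner, iSup_image]

variable {H}

theorem IsHilbertSection.mul_inner_star_le {t : X} (ht : H.IsHilbertSection t) (x : X) :
    Qs.mul (H.inner x t) (Qs.star (H.inner x t)) ≤ H.inner x x := by
  rw [star_inner, ← H.inner_act]
  exact H.inner_mono_left x (ht x)

theorem IsHilbertSection.inner_mem_PU {s t : X} (hs : H.IsHilbertSection s)
    (ht : H.IsHilbertSection t) (hss : H.inner s s ≤ Qs.e) (htt : H.inner t t ≤ Qs.e) :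
    H.inner s t ∈ Qs.PU := by
  refine ⟨(ht.mul_inner_star_le s).trans hss, ?_⟩
  rw [star_inner, H.inner_star s t]
  exact (hs.mul_inner_star_le t).trans htt

theorem IsHilbertBasis.isHilbertSection {S : Set X} (hS : H.IsHilbertBasis S) {t : X}
    (ht : t ∈ S) : H.IsHilbertSection t := fun x => by
  conv_rhs => rw [hS x]
  exact le_biSup (fun t => H.act (H.inner x t) t) ht

theorem IsHilbertBasis.inner_self_eq {S : Set X} (hS : H.IsHilbertBasis S) (x : X) :
    H.inner x x = ⨆ t ∈ S, Qs.mul (H.inner x t) (Qs.star (H.inner x t)) := by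
  nth_rewrite 1 [hS x]
  simp only [inner_biSup_left, inner_act, star_inner]

theorem IsHilbertBasis.inner_self_le_e {S : Set X} (hS : H.IsHilbertBasis S) {x : X}
    (hx : ∀ t ∈ S, Qs.mul (H.inner x t) (Qs.star (H.inner x t)) ≤ Qs.e) :
    H.inner x x ≤ Qs.e :=
  (hS.inner_self_eq x).trans_le (iSup₂_le hx)

end PreHilbertModule

namespace QSheaf

variable {Q X : Type*} [Order.Frame Q] [Order.Frame X] {Qf : InverseQuantalFrame Q}
  (H : QSheaf Qf X)

theorem supp_inner_le_sppX {t : X} (ht : H.IsHilbertSection t) (x : X) :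
    Qf.supp (H.inner x t) ≤ H.sppX x :=
  le_inf ((Qf.supp_le_mul_star _).trans (ht.mul_inner_star_le x)) (Qf.supp_le_e _)

theorem le_act_sppX (x : X) : x ≤ H.act (H.sppX x) x := by
  obtain ⟨S, hS⟩ := H.hasBasis
  conv_lhs => rw [hS x]
  refine iSup₂_le fun t ht => ?_
  have ht' : H.IsHilbertSection t := PreHilbertModule.IsHilbertBasis.isHilbertSection hS ht
  calc H.act (H.inner x t) t
      ≤ H.act (Qf.mul (Qf.supp (H.inner x t)) (H.inner x t)) t :=
        H.act_mono_left t (Qf.le_supp_mul _)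
    _ = H.act (Qf.supp (H.inner x t)) (H.act (H.inner x t) t) := H.act_mul _ _ _
    _ ≤ H.act (H.sppX x) (H.act (H.inner x t) t) :=
        H.act_mono_left _ (H.supp_inner_le_sppX ht' x)
    _ ≤ H.act (H.sppX x) x := H.act_mono_right _ (ht' x)

theorem isLocalSection_of_isHilbertSection {s : X} (hs : H.IsHilbertSection s) :
    H.IsLocalSection s := fun x hx => by
  refine le_antisymm ?_ ((H.le_act_sppX x).trans (H.act_mono_right _ hx))
  have hspp : H.sppX x ≤ H.inner x s := inf_le_left.trans (H.inner_mono_right x hx)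
  exact (H.act_mono_left s hspp).trans (hs x)

end QSheaf

/-- A Hilbert basis of a `Q`-sheaf is principal iff all inner
products of its elements are partial units. -/
theorem stmt13 {Q X : Type*} [Order.Frame Q] [Order.Frame X]
    (Qf : InverseQuantalFrame Q) (H : QSheaf Qf X)
    (S : Set X) (hS : H.IsHilbertBasis S) :
    (∀ s ∈ S, H.IsPrincipalSection s) ↔
    (∀ s ∈ S, ∀ t ∈ S, H.inner s t ∈ Qf.toQuantale.PU) := by
  constructor
  · intro hP s hs t ht
    exact (hS.isHilbertSection hs).inner_mem_PU (hS.isHilbertSection ht) (hP s hs).2 (hP t ht).2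
  · intro hPU s hs
    exact ⟨H.isLocalSection_of_isHilbertSection (hS.isHilbertSection hs),
      hS.inner_self_le_e fun t ht => (hPU s hs t ht).1⟩
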